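/- Properties of the limit of a system of n-charts. Let (K_α) be a system of n-charts in ℝ^n and let K be its limit, the collection of maximal cells of the system. Then K is a complex with |K| = ⋃_α |K_α|, and every cell A ∈ ⋃_α K_α satisfies int(A) ⊂ int(B) for some B ∈ K. Moreover: (i) for every A ∈ K, the set V_A = ⋃{int(B) : B ∈ K, A ⊂ B} is open in ℝ^n; (ii) there exists a constant κ ≥ 1 depending only on n such that for every A ∈ K of dimension ≥ 1 the set {x ∈ ℝ^n : dist(x, A) < κ^{-1} dist(x, ∂A)} is contained in V_A; (iii) every cell A ∈ K is contained in at most 3^n cells B ∈ K. -/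

import Mathlib

open MeasureTheory Metric Set Filter
open scoped ENNReal NNReal Topology BigOperators

noncomputable section

namespace Paper

/-- Euclidean space ℝ^n. -/
abbrev Vn (n : ℕ) := EuclideanSpace ℝ (Fin n)

/-- The d-dimensional Hausdorff measure on ℝ^n. -/
abbrev HM (n d : ℕ) : Measure (Vn n) := Measure.hausdorffMeasure (d : ℝ)

/-- The scale radius `r_s(x)`; for `s = ∞` it equals the distance to the complement of `X`. -/
def scaleRadius {n : ℕ} (X : Set (Vn n)) (s : ℝ≥0∞) (x : Vn n) : ℝ≥0∞ :=
  if s = ⊤ then EMetric.infEdist x Xᶜ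
  else min (s / (1 + s) * EMetric.infEdist x Xᶜ) s

/-- Real version of the scale radius, for a finite scale `t`. -/
def scaleRadiusReal {n : ℕ} (X : Set (Vn n)) (t : ℝ) (x : Vn n) : ℝ :=
  (scaleRadius X (ENNReal.ofReal t) x).toReal

/-- `E` is relatively closed in `X`. -/
def RelClosedIn {n : ℕ} (X E : Set (Vn n)) : Prop :=
  ∃ C : Set (Vn n), IsClosed C ∧ E = C ∩ X

/-- `E` is `H^d` locally finite in `X`. -/
def HdLocallyFiniteOn (n d : ℕ) (X E : Set (Vn n)) : Prop :=
  ∀ x ∈ X, ∃ r : ℝ, 0 < r ∧ HM n d (E ∩ ball x r) < ⊤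

/-- The core `E^*` of `E` in `X`: the support of `H^d ⌞ E` in `X`. -/
def core (n d : ℕ) (X E : Set (Vn n)) : Set (Vn n) :=
  {x | x ∈ X ∧ ∀ r : ℝ, 0 < r → 0 < HM n d (E ∩ ball x r)}

/-- The support in `X` of a measure `μ`. -/
def suppIn {n : ℕ} (X : Set (Vn n)) (μ : Measure (Vn n)) : Set (Vn n) :=
  {x | x ∈ X ∧ ∀ r : ℝ, 0 < r → 0 < μ (ball x r)}

/-- A sliding deformation of `E` along the boundary `Γ` in the open set `U ⊆ X`. -/
structure IsSlidingDeformation {n : ℕ} (X Γ E U : Set (Vn n)) (f : Vn n → Vn n) : Prop where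
  lipschitz : ∃ K : ℝ≥0, LipschitzOnWith K f E
  mapsToX : ∀ x ∈ E, f x ∈ X
  homotopy : ∃ F : ℝ × Vn n → Vn n,
    ContinuousOn F (Set.Icc (0:ℝ) 1 ×ˢ E) ∧
    (∀ x ∈ E, F (0, x) = x) ∧
    (∀ x ∈ E, F (1, x) = f x) ∧
    (∀ t ∈ Set.Icc (0:ℝ) 1, ∀ x ∈ E, F (t, x) ∈ X) ∧
    (∀ t ∈ Set.Icc (0:ℝ) 1, ∀ x ∈ E ∩ Γ, F (t, x) ∈ Γ) ∧
    (∀ t ∈ Set.Icc (0:ℝ) 1, ∀ x ∈ E ∩ U, F (t, x) ∈ U) ∧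
    ∃ K : Set (Vn n), IsCompact K ∧ K ⊆ E ∩ U ∧
      ∀ t ∈ Set.Icc (0:ℝ) 1, ∀ x ∈ E \ K, F (t, x) = x

/-- A global sliding deformation in `U` is a sliding deformation of `X` itself. -/
def IsGlobalSlidingDeformation {n : ℕ} (X Γ U : Set (Vn n)) (f : Vn n → Vn n) : Prop :=
  IsSlidingDeformation X Γ X U f

/-- `E` is `(κ,h,s)`-quasiminimal with respect to the energy `I` along `Γ` in `X`. -/
def Quasiminimal {n : ℕ} (I : Measure (Vn n)) (X Γ E : Set (Vn n))
    (κ h : ℝ) (s : ℝ≥0∞) : Prop :=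
  ∀ (x : Vn n) (r : ℝ), 0 < r → ENNReal.ofReal r ≤ scaleRadius X s x → ball x r ⊆ X →
    ∀ f : Vn n → Vn n, IsSlidingDeformation X Γ E (ball x r) f →
      I {y | y ∈ E ∧ f y ≠ y} ≤
        ENNReal.ofReal κ * I (f '' {y | y ∈ E ∧ f y ≠ y}) +
        ENNReal.ofReal h * I (E ∩ ball x (h * r))

/-- Admissible energy in `X`, with comparability constant `Λ` (Definition of the paper). -/
structure AdmissibleEnergyWith {n : ℕ} (d : ℕ) (X : Set (Vn n)) (I : Measure (Vn n))
    (Λ : ℝ) : Prop where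
  one_le : 1 ≤ Λ
  le_hausdorff : ∀ A : Set (Vn n), A ⊆ X → I A ≤ ENNReal.ofReal Λ * HM n d A
  hausdorff_le : ∀ A : Set (Vn n), A ⊆ X → HM n d A ≤ ENNReal.ofReal Λ * I A
  tangentRatio : ∀ x ∈ X, ∀ W : AffineSubspace ℝ (Vn n), x ∈ W →
    Module.finrank ℝ W.direction = d →
    ∀ f : Vn n → Vn n, ContDiff ℝ 1 f → f x = x →
      (∀ v ∈ W.direction, fderiv ℝ f x v = v) →
      Tendsto (fun r : ℝ =>
          I (f '' ((W : Set (Vn n)) ∩ ball x r)) / I ((W : Set (Vn n)) ∩ ball x r))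
        (𝓝[>] 0) (𝓝 1)
  elliptic : ∀ x ∈ X, ∃ R : ℝ, 0 < R ∧ closedBall x R ⊆ X ∧ ∃ ε : ℝ → ℝ,
    (∀ r : ℝ, 0 < r → r ≤ R → 0 ≤ ε r) ∧ Tendsto ε (𝓝[>] 0) (𝓝 0) ∧
    ∀ r : ℝ, 0 < r → r ≤ R → ∀ W : AffineSubspace ℝ (Vn n), x ∈ W →
      Module.finrank ℝ W.direction = d →
      ∀ S : Set (Vn n), IsCompact S → S ⊆ closedBall x r → HM n d S < ⊤ →
        (¬ ∃ ψ : Vn n → Vn n, (∃ K : ℝ≥0, LipschitzOnWith K ψ (closedBall x r)) ∧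
            ψ '' closedBall x r ⊆ closedBall x r ∧
            (∀ y ∈ (W : Set (Vn n)) ∩ sphere x r, ψ y = y) ∧
            ψ '' S ⊆ (W : Set (Vn n)) ∩ sphere x r) →
        I ((W : Set (Vn n)) ∩ ball x r) ≤ I (S ∩ ball x r) + ENNReal.ofReal (ε r * r ^ d)

/-- Admissible energy in `X` (with an unspecified comparability constant). -/
def AdmissibleEnergy {n : ℕ} (d : ℕ) (X : Set (Vn n)) (I : Measure (Vn n)) : Prop :=
  ∃ Λ : ℝ, AdmissibleEnergyWith d X I Λ

/-- `E` is `H^d`-rectifiable: covered, up to an `H^d`-null set, by countably many Lipschitz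
images of subsets of `ℝ^d`. -/
def HdRectifiable (n d : ℕ) (E : Set (Vn n)) : Prop :=
  ∃ (f : ℕ → EuclideanSpace ℝ (Fin d) → Vn n) (A : ℕ → Set (EuclideanSpace ℝ (Fin d))),
    (∀ k, ∃ K : ℝ≥0, LipschitzOnWith K (f k) (A k)) ∧
    HM n d (E \ ⋃ k, f k '' A k) = 0

/-- Blow-up measures `(2r)^{-d} (H^d ⌞ F)(x + r(· - x))`. -/
def blowup (n d : ℕ) (F : Set (Vn n)) (x : Vn n) (r : ℝ) : Measure (Vn n) :=
  (ENNReal.ofReal (2 * r) ^ d)⁻¹ •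
    Measure.map (fun y => x + r⁻¹ • (y - x)) ((HM n d).restrict F)

/-- The linear subspace `W` is the direction of an approximate tangent `d`-plane of `F` at `x`:
the blow-up measures converge weakly to `H^d` restricted to the affine plane `x + W`. -/
def ApproxTangentAt (n d : ℕ) (F : Set (Vn n)) (x : Vn n) (W : Submodule ℝ (Vn n)) : Prop :=
  Module.finrank ℝ W = d ∧
  ∀ g : Vn n → ℝ, Continuous g → HasCompactSupport g →
    Tendsto (fun r : ℝ => ∫ y, g y ∂(blowup n d F x r)) (𝓝[>] 0)
      (𝓝 (∫ y, g y ∂((HM n d).restrict ((fun v => x + v) '' (W : Set (Vn n))))))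

/-- Weak convergence of a sequence of Radon measures, in the open set `X`. -/
def WeakTendstoIn {n : ℕ} (X : Set (Vn n)) (μ : ℕ → Measure (Vn n))
    (ν : Measure (Vn n)) : Prop :=
  ∀ g : Vn n → ℝ, Continuous g → HasCompactSupport g → tsupport g ⊆ X →
    Tendsto (fun i => ∫ y, g y ∂(μ i)) atTop (𝓝 (∫ y, g y ∂ν))

/-- Orthogonal projection onto a subspace, as a continuous linear map of the ambient space. -/
def projL {n : ℕ} (W : Submodule ℝ (Vn n)) : Vn n →L[ℝ] Vn n :=
  W.subtypeL.comp (W.orthogonalProjectionOnto)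

/-- `γ` is the Haar probability measure on the Grassmannian of `d`-planes of the subspace `W₀`
(realized as orthogonal projection operators): it is a probability measure carried by the set of
orthogonal projections onto `d`-dimensional subspaces of `W₀`, invariant under the conjugation
action of the orthogonal transformations preserving `W₀`. -/
def IsGrassHaar (n d : ℕ) (W₀ : Submodule ℝ (Vn n))
    (γ : Measure (Vn n →L[ℝ] Vn n)) : Prop :=
  IsProbabilityMeasure γ ∧
  γ {P | ¬ ∃ W : Submodule ℝ (Vn n), W ≤ W₀ ∧ Module.finrank ℝ W = d ∧ P = projL W} = 0 ∧
  ∀ g : Vn n ≃ₗᵢ[ℝ] Vn n, g '' (W₀ : Set (Vn n)) = (W₀ : Set (Vn n)) →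
    Measure.map (fun P => ((g.toContinuousLinearEquiv : Vn n →L[ℝ] Vn n).comp
        (P.comp ((g.symm.toContinuousLinearEquiv : Vn n →L[ℝ] Vn n))))) γ = γ

/-- `𝓘` is induced by a continuous integrand `i : X × G(d,n) → (0,∞)`. -/
def InducedByContinuousIntegrand {n : ℕ} (d : ℕ) (X : Set (Vn n))
    (I : Measure (Vn n)) : Prop :=
  ∃ i : Vn n × (Vn n →L[ℝ] Vn n) → ℝ,
    ContinuousOn i (X ×ˢ {P | ∃ W : Submodule ℝ (Vn n), Module.finrank ℝ W = d ∧ P = projL W}) ∧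
    (∀ p ∈ X ×ˢ {P | ∃ W : Submodule ℝ (Vn n), Module.finrank ℝ W = d ∧ P = projL W},
      0 < i p) ∧
    ∀ F : Set (Vn n), F ⊆ X → MeasurableSet F → HM n d F < ⊤ → HdRectifiable n d F →
      ∀ τ : Vn n → Submodule ℝ (Vn n),
        (∀ᵐ x ∂((HM n d).restrict F), ApproxTangentAt n d F x (τ x)) →
        I F = ∫⁻ x in F, ENNReal.ofReal (i (x, projL (τ x))) ∂(HM n d)

/-- A Lipschitz neighborhood retract of `X`. -/
def LipNbhdRetract {n : ℕ} (X Γ : Set (Vn n)) : Prop :=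
  ∃ O : Set (Vn n), IsOpen O ∧ Γ ⊆ O ∧ O ⊆ X ∧
    ∃ ρ : Vn n → Vn n, (∃ K : ℝ≥0, LipschitzOnWith K ρ O) ∧ ρ '' O ⊆ Γ ∧ ∀ x ∈ Γ, ρ x = x

/-- `Γ` is locally `C¹`-diffeomorphic to a cone. -/
def LocallyDiffeoToCone {n : ℕ} (X Γ : Set (Vn n)) : Prop :=
  ∀ x ∈ Γ, ∃ R : ℝ, 0 < R ∧ closedBall x R ⊆ X ∧
    ∃ O : Set (Vn n), IsOpen O ∧ x ∈ O ∧
    ∃ φ ψ : Vn n → Vn n,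
      ContDiffOn ℝ 1 φ (ball x R) ∧ ContDiffOn ℝ 1 ψ O ∧
      φ '' ball x R = O ∧ (∀ y ∈ ball x R, ψ (φ y) = y) ∧ (∀ z ∈ O, φ (ψ z) = z) ∧
      φ x = x ∧
      ∃ S : Set (Vn n), IsClosed S ∧ (∀ y ∈ S, ∀ t : ℝ, 0 ≤ t → x + t • (y - x) ∈ S) ∧
        φ '' (Γ ∩ ball x R) = S ∩ O

/-- A dyadic cell of the grid `𝓔_n(k)`. -/
def IsDyadicCell (n k : ℕ) (A : Set (Vn n)) : Prop :=
  ∃ (m : Fin n → ℤ) (α : Fin n → Bool),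
    A = {y : Vn n | ∀ i, y i ∈ Set.Icc ((m i : ℝ) * (2:ℝ) ^ (-(k:ℤ)))
        ((m i : ℝ) * (2:ℝ) ^ (-(k:ℤ)) + (if α i then (2:ℝ) ^ (-(k:ℤ)) else 0))}

/-- `φ` is `M`-bilipschitz on `S`. -/
def BilipschitzOnWith {n : ℕ} (M : ℝ) (φ : Vn n → Vn n) (S : Set (Vn n)) : Prop :=
  ∀ y ∈ S, ∀ z ∈ S, M⁻¹ * dist y z ≤ dist (φ y) (φ z) ∧ dist (φ y) (φ z) ≤ M * dist y z

/-- The grid axiom of Whitney subsets, with constant `M` and scale `t`. -/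
def WhitneyGridWith {n : ℕ} (X Γ : Set (Vn n)) (M t : ℝ) : Prop :=
  1 ≤ M ∧ 0 < t ∧
  ∀ x ∈ Γ, ∃ O : Set (Vn n), IsOpen O ∧
    ∃ φ : Vn n → Vn n, BilipschitzOnWith M φ (ball x (scaleRadiusReal X t x)) ∧
      φ '' ball x (scaleRadiusReal X t x) = O ∧
      ∃ k : ℕ, M⁻¹ * scaleRadiusReal X t x ≤ (2:ℝ) ^ (-(k:ℤ)) ∧
        ∃ S : Set (Set (Vn n)), (∀ A ∈ S, IsDyadicCell n k A) ∧
          φ '' (Γ ∩ ball x (scaleRadiusReal X t x)) = O ∩ ⋃₀ S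

/-- A Whitney subset of `X`, with explicit constants `M`, `t`. -/
def WhitneySubsetWith {n : ℕ} (X Γ : Set (Vn n)) (M t : ℝ) : Prop :=
  RelClosedIn X Γ ∧ LipNbhdRetract X Γ ∧ LocallyDiffeoToCone X Γ ∧ WhitneyGridWith X Γ M t

/-- A Whitney subset of `X`. -/
def WhitneySubset {n : ℕ} (X Γ : Set (Vn n)) : Prop :=
  ∃ M t : ℝ, WhitneySubsetWith X Γ M t

/-! Cells, complexes and charts. -/

/-- The reference cells `∏ [0, α_i]`, `α ∈ {-1,0,1}^n`, of the canonical `n`-complex `E_n`. -/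
def refCell (n : ℕ) (α : Fin n → Fin 3) : Set (Vn n) :=
  {y | ∀ i, y i ∈ Set.Icc (min 0 (![(-1:ℝ), 0, 1] (α i))) (max 0 (![(-1:ℝ), 0, 1] (α i)))}

/-- A similarity of `ℝ^n`. -/
def IsSimilarity {n : ℕ} (f : Vn n → Vn n) : Prop :=
  ∃ r : ℝ, 0 < r ∧ ∀ x y, dist (f x) (f y) = r * dist x y

/-- A cell of `ℝ^n`: a face of a cube, i.e. the image of a reference cell under a similarity. -/
def IsCell (n : ℕ) (A : Set (Vn n)) : Prop :=
  ∃ (f : Vn n → Vn n) (α : Fin n → Fin 3), IsSimilarity f ∧ A = f '' refCell n α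

/-- Interior of a cell relative to its affine span. -/
def cellInt {n : ℕ} (A : Set (Vn n)) : Set (Vn n) :=
  {x | x ∈ A ∧ ∃ ε : ℝ, 0 < ε ∧ ∀ y ∈ (affineSpan ℝ A : Set (Vn n)), dist y x < ε → y ∈ A}

/-- Boundary of a cell relative to its affine span. -/
def cellBry {n : ℕ} (A : Set (Vn n)) : Set (Vn n) := A \ cellInt A

/-- Dimension of a cell: the dimension of its affine span. -/
def cellDim {n : ℕ} (A : Set (Vn n)) : ℕ :=
  Module.finrank ℝ (affineSpan ℝ A).direction

/-- A complex of cells. -/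
def IsComplex {n : ℕ} (K : Set (Set (Vn n))) : Prop :=
  (∀ A ∈ K, IsCell n A) ∧
  (∀ A ∈ K, ∀ B ∈ K, A ≠ B → cellInt A ∩ cellInt B = ∅) ∧
  (∀ x ∈ ⋃₀ K, ∃ U : Set (Vn n), IsOpen U ∧ x ∈ U ∧ {A ∈ K | (A ∩ U).Nonempty}.Finite) ∧
  (∀ A ∈ K, ∃ U : Set (Vn n), IsOpen U ∧ cellInt A ⊆ U ∧
      U ∩ ⋃₀ K ⊆ ⋃ B ∈ {B ∈ K | A ⊆ B}, cellInt B)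

/-- The set `V_A = ⋃ {int B | B ∈ K, A ⊆ B}`. -/
def cellNbhd {n : ℕ} (K : Set (Set (Vn n))) (A : Set (Vn n)) : Set (Vn n) :=
  ⋃ B ∈ {B ∈ K | A ⊆ B}, cellInt B

/-- An `n`-chart: the image of the canonical `n`-complex `E_n` under a similarity. -/
def IsChart {n : ℕ} (K : Set (Set (Vn n))) : Prop :=
  ∃ f : Vn n → Vn n, IsSimilarity f ∧ K = {A | ∃ α : Fin n → Fin 3, A = f '' refCell n α}

/-- A system of `n`-charts. -/
def IsChartSystem {n : ℕ} {ι : Type} (K : ι → Set (Set (Vn n))) : Prop :=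
  (∀ a, IsChart (K a)) ∧
  (∀ A ∈ ⋃ a, K a, ∀ B ∈ ⋃ a, K a, (cellInt A ∩ cellInt B).Nonempty →
      cellInt A ⊆ cellInt B ∨ cellInt B ⊆ cellInt A) ∧
  (∀ x ∈ ⋃ a, ⋃₀ (K a), ∃ U : Set (Vn n), IsOpen U ∧ x ∈ U ∧
      ∃ S : Set (Set (Vn n)), S.Finite ∧ S ⊆ ⋃ a, K a ∧
        ∀ A ∈ ⋃ a, K a, (A ∩ (U ∩ ⋃ a, ⋃₀ (K a))).Nonempty →
          ∃ B ∈ S, cellInt A ⊆ cellInt B)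

/-- The limit of a system of `n`-charts: the collection of its maximal cells. -/
def systemLimit {n : ℕ} {ι : Type} (K : ι → Set (Set (Vn n))) : Set (Set (Vn n)) :=
  {A | A ∈ ⋃ a, K a ∧ ∀ B ∈ ⋃ a, K a, (cellInt A ∩ cellInt B).Nonempty → cellInt B ⊆ cellInt A}

/-- An `n`-complex: the limit of a system of `n`-charts. -/
def IsNComplex {n : ℕ} (K : Set (Set (Vn n))) : Prop :=
  ∃ (ι : Type) (Kα : ι → Set (Set (Vn n))), IsChartSystem Kα ∧ K = systemLimit Kα

/-- A subcomplex of `K`. -/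
def IsSubcomplex {n : ℕ} (K L : Set (Set (Vn n))) : Prop :=
  L ⊆ K ∧ ∀ A ∈ L, ∀ B ∈ K, A ⊆ B → B ∈ L

/-- The rigid open set `U(L)` induced by a set of cells. -/
def rigidOpen {n : ℕ} (L : Set (Set (Vn n))) : Set (Vn n) :=
  ⋃ A ∈ L, cellInt A

/-- `φ` is locally Lipschitz on `S`. -/
def LocallyLipschitzOn {n : ℕ} (S : Set (Vn n)) (φ : Vn n → Vn n) : Prop :=
  ∀ x ∈ S, ∃ U : Set (Vn n), IsOpen U ∧ x ∈ U ∧ ∃ c : ℝ≥0, LipschitzOnWith c φ (U ∩ S)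

/-- The union of interiors of cells of dimension `> d`. -/
def highSkel {n : ℕ} (K : Set (Set (Vn n))) (d : ℕ) : Set (Vn n) :=
  ⋃ A ∈ {A ∈ K | d < cellDim A}, cellInt A

/-- Upper Lebesgue integral (infimum of integrals of measurable majorants). -/
def upperLintegral {α : Type*} [MeasurableSpace α] (μ : Measure α) (s : Set α)
    (f : α → ℝ≥0∞) : ℝ≥0∞ :=
  ⨅ (g : α → ℝ≥0∞) (_ : Measurable g) (_ : ∀ x, f x ≤ g x), ∫⁻ x in s, g x ∂μ

/-- The norm of a linear map restricted to a subset `S`. -/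
def opNormOn {n : ℕ} (u : Vn n →L[ℝ] Vn n) (S : Set (Vn n)) : ℝ :=
  sSup ((fun x => ‖u x‖) '' {x ∈ S | ‖x‖ ≤ 1})

/-! Up to a similarity, every cell of the system is a reference cell `∏ [0, α_i]` of `E_n`,
whose relative interior is the product of the open coordinate intervals. The open star of a
reference cell is covered by the relative interiors of the reference cells containing it, and each
of those lies in the interior of a maximal cell: maximal cells exist by the local finiteness axiom,
and two maximal cells whose interiors meet coincide. Transporting the star along the chart gives
that `V_A` is open, the estimate with `κ = 2` (when `A` is not a point, the ball around a point of
`int A` of radius its distance to `∂A` stays in the star), and the bound `3 ^ n`: a maximal cell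
containing `A` meets the star, hence is the maximal cell above one of the `3 ^ n` reference cells
of the chart. -/

section ChartSystems

def refInterval : Fin 3 → Set ℝ := ![Icc (-1) 0, {0}, Icc 0 1]

def refOpenInterval : Fin 3 → Set ℝ := ![Ioo (-1) 0, {0}, Ioo 0 1]

lemma Icc_endpoint_eq_refInterval (a : Fin 3) :
    Icc (min 0 (![(-1:ℝ), 0, 1] a)) (max 0 (![(-1:ℝ), 0, 1] a)) = refInterval a := by
  fin_cases a <;> simp [refInterval]

lemma closure_refOpenInterval (a : Fin 3) : closure (refOpenInterval a) = refInterval a := by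
  fin_cases a <;> simp [refOpenInterval, refInterval]

lemma isCompact_refInterval (a : Fin 3) : IsCompact (refInterval a) := by
  fin_cases a <;> simp [refInterval, isCompact_Icc]

lemma zero_mem_refInterval (a : Fin 3) : (0 : ℝ) ∈ refInterval a := by
  fin_cases a <;> simp [refInterval]

lemma refOpenInterval_subset_refInterval (a : Fin 3) : refOpenInterval a ⊆ refInterval a := by
  fin_cases a <;> simp [refOpenInterval, refInterval, Ioo_subset_Icc_self]

lemma isOpen_refOpenInterval {a : Fin 3} (ha : a ≠ 1) : IsOpen (refOpenInterval a) := by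
  fin_cases a <;> simp_all [refOpenInterval, isOpen_Ioo]

lemma abs_lt_one_of_mem_refOpenInterval {a : Fin 3} {t : ℝ} (h : t ∈ refOpenInterval a) :
    |t| < 1 := by
  fin_cases a <;> simp_all [refOpenInterval, abs_lt] <;> linarith

lemma exists_mem_refOpenInterval {t : ℝ} (ht : |t| < 1) : ∃ a, t ∈ refOpenInterval a := by
  rw [abs_lt] at ht
  rcases lt_trichotomy t 0 with h | h | h
  · exact ⟨0, by simpa [refOpenInterval] using ⟨ht.1, h⟩⟩
  · exact ⟨1, by simp [refOpenInterval, h]⟩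
  · exact ⟨2, by simpa [refOpenInterval] using ⟨h, ht.2⟩⟩

lemma eq_of_mem_refOpenInterval {a b : Fin 3} {t : ℝ} (ha : t ∈ refOpenInterval a)
    (hb : t ∈ refOpenInterval b) : a = b := by
  fin_cases a <;> fin_cases b <;> simp_all [refOpenInterval] <;> linarith

lemma mem_refOpenInterval_of_sub_add_mem {a : Fin 3} (ha : a ≠ 1) {t δ : ℝ} (hδ : 0 < δ)
    (h₁ : t - δ ∈ refInterval a) (h₂ : t + δ ∈ refInterval a) :
    t ∈ refOpenInterval a := by
  fin_cases a <;> simp_all [refOpenInterval, refInterval] <;> constructor <;> linarith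

lemma endpoint_mem_refInterval (a : Fin 3) : ![(-1:ℝ), 0, 1] a ∈ refInterval a := by
  fin_cases a <;> simp [refInterval]

lemma endpoint_ne_zero {a : Fin 3} (ha : a ≠ 1) : ![(-1:ℝ), 0, 1] a ≠ 0 := by
  fin_cases a <;> simp_all

lemma zero_notMem_refOpenInterval {a : Fin 3} (ha : a ≠ 1) : (0 : ℝ) ∉ refOpenInterval a := by
  fin_cases a <;> simp_all [refOpenInterval]

lemma endpoint_notMem_refOpenInterval {a : Fin 3} (ha : a ≠ 1) :
    ![(-1:ℝ), 0, 1] a ∉ refOpenInterval a := by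
  fin_cases a <;> simp_all [refOpenInterval]

lemma mem_refOpenInterval_of_abs_sub_lt {a : Fin 3} {t u : ℝ} (ht : t ∈ refOpenInterval a)
    (h₀ : |u - t| < |t|) (h₁ : |u - t| < |t - ![(-1:ℝ), 0, 1] a|) :
    u ∈ refOpenInterval a := by
  fin_cases a
  · simp [refOpenInterval] at ht h₁ ⊢
    rw [abs_of_neg ht.2] at h₀
    rw [abs_of_pos (show 0 < t + 1 by linarith)] at h₁
    rw [abs_lt] at h₀ h₁
    constructor <;> linarith
  · simp only [refOpenInterval, Fin.mk_one, Matrix.cons_val_one, Matrix.cons_val_zero,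
      mem_singleton_iff] at ht
    simp only [ht, sub_zero, abs_zero] at h₀
    exact absurd h₀ (abs_nonneg u).not_gt
  · simp [refOpenInterval] at ht h₁ ⊢
    rw [abs_of_pos ht.1] at h₀
    rw [abs_of_neg (show t - 1 < 0 by linarith)] at h₁
    rw [abs_lt] at h₀ h₁
    constructor <;> linarith

variable {n : ℕ}

def refOpenCell (n : ℕ) (α : Fin n → Fin 3) : Set (Vn n) :=
  {y | ∀ i, y i ∈ refOpenInterval (α i)}

/-- The open star of `refCell n α` in `E_n`, described coordinatewise. -/
def refStar (n : ℕ) (α : Fin n → Fin 3) : Set (Vn n) :=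
  {z | ∀ i, |z i| < 1 ∧ (α i ≠ 1 → z i ∈ refOpenInterval (α i))}

lemma mem_refCell {α : Fin n → Fin 3} {y : Vn n} :
    y ∈ refCell n α ↔ ∀ i, y i ∈ refInterval (α i) := by
  simp only [refCell, ← Icc_endpoint_eq_refInterval]; rfl

lemma refCell_eq_preimage (α : Fin n → Fin 3) :
    refCell n α = EuclideanSpace.equiv (Fin n) ℝ ⁻¹' univ.pi fun i => refInterval (α i) := by
  ext y; simp [mem_refCell]

lemma refOpenCell_eq_preimage (α : Fin n → Fin 3) :
    refOpenCell n α =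
      EuclideanSpace.equiv (Fin n) ℝ ⁻¹' univ.pi fun i => refOpenInterval (α i) := by
  ext y; simp [refOpenCell]

lemma isCompact_refCell (α : Fin n → Fin 3) : IsCompact (refCell n α) := by
  rw [refCell_eq_preimage]
  exact (EuclideanSpace.equiv (Fin n) ℝ).toHomeomorph.isCompact_preimage.2
    (isCompact_univ_pi fun i => isCompact_refInterval (α i))

lemma closure_refOpenCell (α : Fin n → Fin 3) : closure (refOpenCell n α) = refCell n α := by
  rw [refOpenCell_eq_preimage, ← ContinuousLinearEquiv.preimage_closure, closure_pi_set,
    refCell_eq_preimage]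
  simp only [closure_refOpenInterval]

lemma zero_mem_refCell (α : Fin n → Fin 3) : (0 : Vn n) ∈ refCell n α :=
  mem_refCell.2 fun i => zero_mem_refInterval (α i)

lemma refOpenCell_nonempty (α : Fin n → Fin 3) : (refOpenCell n α).Nonempty := by
  rw [← closure_nonempty_iff, closure_refOpenCell]
  exact ⟨0, zero_mem_refCell α⟩

lemma refOpenCell_subset_refCell (α : Fin n → Fin 3) : refOpenCell n α ⊆ refCell n α :=
  fun _ hy => mem_refCell.2 fun i => refOpenInterval_subset_refInterval (α i) (hy i)

lemma apply_eq_zero_of_mem_affineSpan {α : Fin n → Fin 3} {y : Vn n} {i : Fin n}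
    (hy : y ∈ affineSpan ℝ (refCell n α)) (hi : α i = 1) : y i = 0 := by
  let W := (LinearMap.ker (PiLp.projₗ 2 (fun _ : Fin n => ℝ) i :
    Vn n →ₗ[ℝ] ℝ)).toAffineSubspace
  have hW : refCell n α ⊆ W := fun x hx => by
    simpa [W, hi, refInterval] using mem_refCell.1 hx i
  simpa [W] using affineSpan_le.2 hW hy

lemma add_single_mem_affineSpan {α : Fin n → Fin 3} {x : Vn n} {i : Fin n}
    (hx : x ∈ refCell n α) (hi : α i ≠ 1) (c : ℝ) :
    x + EuclideanSpace.single i c ∈ affineSpan ℝ (refCell n α) := by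
  set v := ![(-1:ℝ), 0, 1] (α i)
  have hsingle : EuclideanSpace.single i v ∈ refCell n α := mem_refCell.2 fun j => by
    by_cases hj : j = i
    · subst hj; simpa using endpoint_mem_refInterval (α j)
    · simpa [hj] using zero_mem_refInterval (α j)
  have hdir : EuclideanSpace.single i v ∈ (affineSpan ℝ (refCell n α)).direction := by
    rw [direction_affineSpan]
    simpa using vsub_mem_vectorSpan ℝ hsingle (zero_mem_refCell α)
  have hc : EuclideanSpace.single i c = (c / v) • EuclideanSpace.single i v := by
    ext j
    by_cases hj : j = i
    · subst hj; simp [v, div_mul_cancel₀ c (endpoint_ne_zero hi)]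
    · simp [hj]
  rw [add_comm, hc]
  exact AffineSubspace.vadd_mem_of_mem_direction (Submodule.smul_mem _ _ hdir)
    (subset_affineSpan ℝ _ hx)

lemma isOpen_setOf_imp_mem_refOpenInterval (a : Fin 3) (i : Fin n) :
    IsOpen {z : Vn n | a ≠ 1 → z i ∈ refOpenInterval a} := by
  by_cases ha : a = 1
  · simp [ha]
  · simp only [ne_eq, ha, not_false_eq_true, forall_const]
    exact (isOpen_refOpenInterval ha).preimage (PiLp.continuous_apply 2 _ i)

lemma cellInt_refCell (α : Fin n → Fin 3) : cellInt (refCell n α) = refOpenCell n α := by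
  ext x
  constructor
  · rintro ⟨hx, ε, hε, hball⟩ i
    by_cases hi : α i = 1
    · simpa [hi, refOpenInterval, refInterval] using mem_refCell.1 hx i
    have hshift : ∀ c, |c| < ε → x i + c ∈ refInterval (α i) := fun c hc => by
      have hmem := hball _ (add_single_mem_affineSpan hx hi c) (by simpa using hc)
      simpa using mem_refCell.1 hmem i
    have hhalf : |ε / 2| < ε := by rw [abs_of_pos (half_pos hε)]; linarith
    refine mem_refOpenInterval_of_sub_add_mem hi (half_pos hε) ?_ (hshift _ hhalf)
    simpa [sub_eq_add_neg] using hshift (-(ε / 2)) (by rwa [abs_neg])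
  · intro hx
    refine ⟨refOpenCell_subset_refCell α hx, ?_⟩
    have hO : IsOpen {z : Vn n | ∀ i, α i ≠ 1 → z i ∈ refOpenInterval (α i)} := by
      simpa only [ofPred_forall] using isOpen_iInter_of_finite fun i =>
        isOpen_setOf_imp_mem_refOpenInterval (α i) i
    obtain ⟨ε, hε, hballO⟩ := Metric.isOpen_iff.1 hO x fun i _ => hx i
    refine ⟨ε, hε, fun y hy hyx => refOpenCell_subset_refCell α fun i => ?_⟩
    by_cases hi : α i = 1
    · simp [hi, refOpenInterval, apply_eq_zero_of_mem_affineSpan hy hi]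
    · exact hballO hyx i hi

lemma isOpen_refStar (α : Fin n → Fin 3) : IsOpen (refStar n α) := by
  rw [show refStar n α =
      ⋂ i, ({z : Vn n | |z i| < 1} ∩ {z | α i ≠ 1 → z i ∈ refOpenInterval (α i)})
    from by ext z; simp only [mem_iInter]; rfl]
  exact isOpen_iInter_of_finite fun i =>
    ((isOpen_lt (continuous_abs.comp (PiLp.continuous_apply 2 _ i)) continuous_const)).inter
      (isOpen_setOf_imp_mem_refOpenInterval (α i) i)

lemma refOpenCell_subset_refStar (α : Fin n → Fin 3) : refOpenCell n α ⊆ refStar n α :=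
  fun _ hy i => ⟨abs_lt_one_of_mem_refOpenInterval (hy i), fun _ => hy i⟩

lemma exists_refCell_subset_of_mem_refStar {α : Fin n → Fin 3} {z : Vn n}
    (hz : z ∈ refStar n α) : ∃ β, refCell n α ⊆ refCell n β ∧ z ∈ refOpenCell n β := by
  choose β hβ using fun i => exists_mem_refOpenInterval (hz i).1
  refine ⟨β, fun y hy => mem_refCell.2 fun i => ?_, hβ⟩
  by_cases hi : α i = 1
  · have hyi : y i = 0 := by simpa [hi, refInterval] using mem_refCell.1 hy i
    exact hyi ▸ zero_mem_refInterval (β i)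
  · rw [← eq_of_mem_refOpenInterval ((hz i).2 hi) (hβ i)]
    exact mem_refCell.1 hy i

lemma infDist_cellBry_refCell_le {α : Fin n → Fin 3} {p : Vn n} (hp : p ∈ refOpenCell n α)
    {i : Fin n} {c : ℝ} (hc : p i + c ∈ refInterval (α i) \ refOpenInterval (α i)) :
    infDist p (cellBry (refCell n α)) ≤ |c| := by
  have hq : p + EuclideanSpace.single i c ∈ cellBry (refCell n α) := by
    rw [cellBry, cellInt_refCell]
    refine ⟨mem_refCell.2 fun j => ?_, fun hq => hc.2 (by simpa using hq i)⟩
    by_cases hj : j = i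
    · subst hj; simpa using hc.1
    · simpa [hj] using refOpenInterval_subset_refInterval _ (hp j)
  simpa using infDist_le_dist_of_mem (x := p) hq

lemma ball_infDist_cellBry_subset_refStar {α : Fin n → Fin 3} {j : Fin n} (hj : α j ≠ 1)
    {p : Vn n} (hp : p ∈ refOpenCell n α) :
    ball p (infDist p (cellBry (refCell n α))) ⊆ refStar n α := by
  have hzero : ∀ i, α i ≠ 1 → infDist p (cellBry (refCell n α)) ≤ |p i| := fun i hi => by
    simpa using infDist_cellBry_refCell_le hp (i := i) (c := -p i)
      (by simpa using ⟨zero_mem_refInterval _, zero_notMem_refOpenInterval hi⟩)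
  have hend : ∀ i, α i ≠ 1 →
      infDist p (cellBry (refCell n α)) ≤ |p i - ![(-1:ℝ), 0, 1] (α i)| := fun i hi => by
    simpa [abs_sub_comm] using
      infDist_cellBry_refCell_le hp (i := i) (c := ![(-1:ℝ), 0, 1] (α i) - p i)
      (by simpa using ⟨endpoint_mem_refInterval _, endpoint_notMem_refOpenInterval hi⟩)
  intro z hz i
  have hzi : |z i - p i| < _ := (PiLp.dist_apply_le z p i).trans_lt (mem_ball.1 hz)
  by_cases hi : α i = 1
  · have hpi : p i = 0 := by simpa [hi, refOpenInterval] using hp i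
    refine ⟨?_, fun h => absurd hi h⟩
    calc |z i| = |z i - p i| := by rw [hpi, sub_zero]
      _ < |p j| := hzi.trans_le (hzero j hj)
      _ < 1 := abs_lt_one_of_mem_refOpenInterval (hp j)
  · have hzi' := mem_refOpenInterval_of_abs_sub_lt (hp i) (hzi.trans_le (hzero i hi))
      (hzi.trans_le (hend i hi))
    exact ⟨abs_lt_one_of_mem_refOpenInterval hzi', fun _ => hzi'⟩

lemma IsSimilarity.exists_affineEquiv {f : Vn n → Vn n} (hf : IsSimilarity f) :
    ∃ (e : Vn n ≃ᵃ[ℝ] Vn n) (s : ℝ), 0 < s ∧ ⇑e = f ∧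
      ∀ x y, dist (e x) (e y) = s * dist x y := by
  obtain ⟨r, hr, hd⟩ := hf
  have hg : Isometry fun x => r⁻¹ • f x := Isometry.of_dist_eq fun x y => by
    rw [dist_smul₀, hd, Real.norm_eq_abs, abs_of_pos (inv_pos.2 hr),
      inv_mul_cancel_left₀ hr.ne']
  -- Mazur–Ulam: the isometry `r⁻¹ • f` is affine.
  let g := (hg.affineIsometryOfStrictConvexSpace.toAffineIsometryEquiv rfl).toAffineEquiv
  let e := g.trans (AffineEquiv.homothetyUnitsMulHom (0 : Vn n) (Units.mk0 r hr.ne'))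
  have he : ⇑e = f := funext fun x => by
    simp [e, g, AffineMap.homothety_apply, smul_smul, mul_inv_cancel₀ hr.ne']
  exact ⟨e, r, hr, he, he ▸ hd⟩

section Similarity

variable {e : Vn n ≃ᵃ[ℝ] Vn n} {s : ℝ}

lemma dist_symm_eq_of_dist_eq (hs : 0 < s) (hd : ∀ x y, dist (e x) (e y) = s * dist x y)
    (u v : Vn n) : dist (e.symm u) (e.symm v) = s⁻¹ * dist u v := by
  rw [eq_inv_mul_iff_mul_eq₀ hs.ne', ← hd, e.apply_symm_apply, e.apply_symm_apply]

lemma image_cellInt_subset_cellInt_image (hs : 0 < s)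
    (hd : ∀ x y, dist (e x) (e y) = s * dist x y) (S : Set (Vn n)) :
    e '' cellInt S ⊆ cellInt (e '' S) := by
  rintro _ ⟨x, ⟨hxS, ε, hε, hball⟩, rfl⟩
  refine ⟨mem_image_of_mem e hxS, s * ε, mul_pos hs hε, ?_⟩
  rintro _ hy hyx
  have hspan : (affineSpan ℝ (e '' S) : Set (Vn n)) = e '' affineSpan ℝ S := by
    simpa using congrArg (fun A : AffineSubspace ℝ (Vn n) => (A : Set (Vn n)))
      (AffineSubspace.map_span (e : Vn n →ᵃ[ℝ] Vn n) S).symm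
  rw [hspan] at hy
  obtain ⟨y, hy, rfl⟩ := hy
  rw [hd, mul_lt_mul_iff_right₀ hs] at hyx
  exact mem_image_of_mem e (hball y hy hyx)

lemma cellInt_image_of_dist_eq (hs : 0 < s) (hd : ∀ x y, dist (e x) (e y) = s * dist x y)
    (S : Set (Vn n)) : cellInt (e '' S) = e '' cellInt S := by
  refine Subset.antisymm ?_ (image_cellInt_subset_cellInt_image hs hd S)
  intro z hz
  have h := image_cellInt_subset_cellInt_image (e := e.symm) (inv_pos.2 hs)
    (dist_symm_eq_of_dist_eq hs hd) (e '' S) (mem_image_of_mem e.symm hz)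
  rw [e.image_symm, preimage_image_eq S e.injective] at h
  exact ⟨e.symm z, h, e.apply_symm_apply z⟩

lemma cellBry_image_of_dist_eq (hs : 0 < s) (hd : ∀ x y, dist (e x) (e y) = s * dist x y)
    (S : Set (Vn n)) : cellBry (e '' S) = e '' cellBry S := by
  rw [cellBry, cellBry, cellInt_image_of_dist_eq hs hd, image_sdiff e.injective]

lemma image_ball_of_dist_eq (hs : 0 < s) (hd : ∀ x y, dist (e x) (e y) = s * dist x y)
    (p : Vn n) (r : ℝ) : e '' ball p r = ball (e p) (s * r) := by
  ext z
  refine ⟨?_, fun hz => ⟨e.symm z, ?_, e.apply_symm_apply z⟩⟩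
  · rintro ⟨y, hy, rfl⟩
    rw [mem_ball, hd, mul_lt_mul_iff_right₀ hs]
    exact hy
  · rw [mem_ball, ← mul_lt_mul_iff_right₀ hs, ← hd, e.apply_symm_apply]
    exact hz

lemma infDist_image_le_of_dist_eq (hs : 0 < s) (hd : ∀ x y, dist (e x) (e y) = s * dist x y)
    (x : Vn n) (T : Set (Vn n)) : infDist (e x) (e '' T) ≤ s * infDist x T := by
  rcases T.eq_empty_or_nonempty with rfl | hT
  · simp
  refine le_of_forall_pos_le_add fun ε hε => ?_
  obtain ⟨t, htT, hxt⟩ :=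
    (infDist_lt_iff hT).1 (lt_add_of_pos_right (infDist x T) (div_pos hε hs))
  calc infDist (e x) (e '' T) ≤ dist (e x) (e t) :=
        infDist_le_dist_of_mem (mem_image_of_mem e htT)
    _ = s * dist x t := hd x t
    _ ≤ s * (infDist x T + ε / s) := mul_le_mul_of_nonneg_left hxt.le hs.le
    _ = s * infDist x T + ε := by field_simp

lemma cellInt_image_refCell (hs : 0 < s) (hd : ∀ x y, dist (e x) (e y) = s * dist x y)
    (α : Fin n → Fin 3) : cellInt (e '' refCell n α) = e '' refOpenCell n α := by
  rw [cellInt_image_of_dist_eq hs hd, cellInt_refCell]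

lemma closure_cellInt_image_refCell (hs : 0 < s) (hd : ∀ x y, dist (e x) (e y) = s * dist x y)
    (α : Fin n → Fin 3) : closure (cellInt (e '' refCell n α)) = e '' refCell n α := by
  rw [cellInt_image_refCell hs hd, ← closure_refOpenCell]
  exact (e.toContinuousAffineEquiv.toHomeomorph.image_closure _).symm

lemma exists_ne_one_of_one_le_cellDim {α : Fin n → Fin 3}
    (h : 1 ≤ cellDim (e '' refCell n α)) : ∃ j, α j ≠ 1 := by
  by_contra! hα
  have hpt : refCell n α = {0} := by
    ext y
    simp [mem_refCell, hα, refInterval, PiLp.ext_iff]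
  simp [hpt, cellDim, direction_affineSpan] at h

end Similarity

lemma IsCell.exists_affineEquiv {A : Set (Vn n)} (hA : IsCell n A) :
    ∃ (e : Vn n ≃ᵃ[ℝ] Vn n) (s : ℝ) (α : Fin n → Fin 3), 0 < s ∧
      (∀ x y, dist (e x) (e y) = s * dist x y) ∧ A = e '' refCell n α := by
  obtain ⟨f, α, hf, rfl⟩ := hA
  obtain ⟨e, s, hs, rfl, hd⟩ := hf.exists_affineEquiv
  exact ⟨e, s, α, hs, hd, rfl⟩

lemma IsCell.closure_cellInt {A : Set (Vn n)} (hA : IsCell n A) : closure (cellInt A) = A := by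
  obtain ⟨e, s, α, hs, hd, rfl⟩ := hA.exists_affineEquiv
  exact closure_cellInt_image_refCell hs hd α

lemma IsCell.isCompact {A : Set (Vn n)} (hA : IsCell n A) : IsCompact A := by
  obtain ⟨e, s, α, hs, hd, rfl⟩ := hA.exists_affineEquiv
  exact (isCompact_refCell α).image e.toContinuousAffineEquiv.continuous

lemma IsCell.cellInt_nonempty {A : Set (Vn n)} (hA : IsCell n A) : (cellInt A).Nonempty := by
  obtain ⟨e, s, α, hs, hd, rfl⟩ := hA.exists_affineEquiv
  rw [cellInt_image_refCell hs hd]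
  exact (refOpenCell_nonempty α).image e

lemma IsCell.subset_of_cellInt_subset {A B : Set (Vn n)} (hA : IsCell n A) (hB : IsCell n B)
    (h : cellInt A ⊆ cellInt B) : A ⊆ B := by
  rw [← hA.closure_cellInt, ← hB.closure_cellInt]
  exact closure_mono h

lemma IsChart.exists_affineEquiv {K : Set (Set (Vn n))} (hK : IsChart K) :
    ∃ (e : Vn n ≃ᵃ[ℝ] Vn n) (s : ℝ), 0 < s ∧ (∀ x y, dist (e x) (e y) = s * dist x y) ∧
      K = {A | ∃ α, A = e '' refCell n α} := by
  obtain ⟨f, hf, rfl⟩ := hK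
  obtain ⟨e, s, hs, rfl, hd⟩ := hf.exists_affineEquiv
  exact ⟨e, s, hs, hd, rfl⟩

lemma cellNbhd_anti {K : Set (Set (Vn n))} {A B : Set (Vn n)} (h : A ⊆ B) :
    cellNbhd K B ⊆ cellNbhd K A :=
  biUnion_mono (fun _ hC => ⟨hC.1, h.trans hC.2⟩) fun _ _ => subset_rfl

lemma exists_dist_lt_infDist_of_infDist_lt_half {X : Type*} [PseudoMetricSpace X]
    {A : Set X} (hA : IsCompact A) (hne : A.Nonempty) {B : Set X} {x : X}
    (hx : infDist x A < 2⁻¹ * infDist x B) : ∃ p ∈ A, dist x p < infDist p B := by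
  obtain ⟨p, hpA, hxp⟩ := hA.exists_infDist_eq_dist hne x
  refine ⟨p, hpA, ?_⟩
  have := infDist_le_infDist_add_dist (x := x) (y := p) (s := B)
  linarith

namespace IsChartSystem

variable {ι : Type} {Kα : ι → Set (Set (Vn n))}

lemma exists_chart (hS : IsChartSystem Kα) {A : Set (Vn n)} (hA : A ∈ ⋃ a, Kα a) :
    ∃ (e : Vn n ≃ᵃ[ℝ] Vn n) (s : ℝ) (α : Fin n → Fin 3), 0 < s ∧
      (∀ x y, dist (e x) (e y) = s * dist x y) ∧ A = e '' refCell n α ∧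
      ∀ β, e '' refCell n β ∈ ⋃ a, Kα a := by
  obtain ⟨a, hAa⟩ := mem_iUnion.1 hA
  obtain ⟨e, s, hs, hd, hKa⟩ := (hS.1 a).exists_affineEquiv
  rw [hKa] at hAa
  obtain ⟨α, rfl⟩ := hAa
  exact ⟨e, s, α, hs, hd, rfl, fun β => mem_iUnion.2 ⟨a, hKa ▸ ⟨β, rfl⟩⟩⟩

lemma isCell (hS : IsChartSystem Kα) {A : Set (Vn n)} (hA : A ∈ ⋃ a, Kα a) : IsCell n A := by
  obtain ⟨e, s, α, hs, hd, rfl, -⟩ := hS.exists_chart hA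
  exact ⟨e, α, ⟨s, hs, hd⟩, rfl⟩

lemma exists_mem_systemLimit_cellInt_subset (hS : IsChartSystem Kα) {A : Set (Vn n)}
    (hA : A ∈ ⋃ a, Kα a) : ∃ B ∈ systemLimit Kα, cellInt A ⊆ cellInt B := by
  obtain ⟨x, hx⟩ := (hS.isCell hA).cellInt_nonempty
  have hxK : x ∈ ⋃ a, ⋃₀ Kα a := by
    obtain ⟨a, hAa⟩ := mem_iUnion.1 hA
    exact mem_iUnion.2 ⟨a, A, hAa, hx.1⟩
  obtain ⟨U, -, hxU, S, hSfin, hSK, hcover⟩ := hS.2.2 x hxK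
  have hcover_at_x : ∀ C ∈ ⋃ a, Kα a, x ∈ C → ∃ B ∈ S, cellInt C ⊆ cellInt B :=
    fun C hC hxC => hcover C hC ⟨x, hxC, hxU, hxK⟩
  obtain ⟨B₀, hB₀S, hAB₀⟩ := hcover_at_x A hA hx.1
  obtain ⟨B, ⟨hBS, hAB⟩, hBmax⟩ := Finite.exists_maximalFor cellInt
    {B ∈ S | cellInt A ⊆ cellInt B} (hSfin.subset (sep_subset _ _)) ⟨B₀, hB₀S, hAB₀⟩
  refine ⟨B, ⟨hSK hBS, fun C hC hBC => ?_⟩, hAB⟩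
  rcases hS.2.1 C hC B (hSK hBS) (by rwa [inter_comm]) with hCB | hBC
  · exact hCB
  obtain ⟨B', hB'S, hCB'⟩ := hcover_at_x C hC (hBC (hAB hx)).1
  exact hCB'.trans (hBmax ⟨hB'S, hAB.trans (hBC.trans hCB')⟩ (hBC.trans hCB'))

lemma eq_of_mem_systemLimit (hS : IsChartSystem Kα) {A B : Set (Vn n)}
    (hA : A ∈ systemLimit Kα) (hB : B ∈ systemLimit Kα)
    (h : (cellInt A ∩ cellInt B).Nonempty) : A = B := by
  have hAB : cellInt A = cellInt B := (hB.2 A hA.1 (by rwa [inter_comm])).antisymm (hA.2 B hB.1 h)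
  rw [← (hS.isCell hA.1).closure_cellInt, ← (hS.isCell hB.1).closure_cellInt, hAB]

lemma image_refStar_subset_cellNbhd (hS : IsChartSystem Kα) {e : Vn n ≃ᵃ[ℝ] Vn n} {s : ℝ}
    (hs : 0 < s) (hd : ∀ x y, dist (e x) (e y) = s * dist x y)
    (hK : ∀ β, e '' refCell n β ∈ ⋃ a, Kα a) (α : Fin n → Fin 3) :
    e '' refStar n α ⊆ cellNbhd (systemLimit Kα) (e '' refCell n α) := by
  rintro _ ⟨z, hz, rfl⟩
  obtain ⟨β, hαβ, hzβ⟩ := exists_refCell_subset_of_mem_refStar hz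
  obtain ⟨D, hD, hβD⟩ := hS.exists_mem_systemLimit_cellInt_subset (hK β)
  have hez : e z ∈ cellInt (e '' refCell n β) := by
    rw [cellInt_image_refCell hs hd]
    exact mem_image_of_mem e hzβ
  refine mem_biUnion ⟨hD, (image_mono hαβ).trans ?_⟩ (hβD hez)
  exact (hS.isCell (hK β)).subset_of_cellInt_subset (hS.isCell hD.1) hβD

lemma sUnion_systemLimit (hS : IsChartSystem Kα) : ⋃₀ systemLimit Kα = ⋃ a, ⋃₀ Kα a := by
  refine (sUnion_subset fun A hA => ?_).antisymm
    (iUnion_subset fun a => sUnion_subset fun A hA => ?_)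
  · obtain ⟨a, hAa⟩ := mem_iUnion.1 hA.1
    exact (subset_sUnion_of_mem hAa).trans (subset_iUnion (fun a => ⋃₀ Kα a) a)
  · have hA' : A ∈ ⋃ a, Kα a := mem_iUnion.2 ⟨a, hA⟩
    obtain ⟨B, hB, hAB⟩ := hS.exists_mem_systemLimit_cellInt_subset hA'
    exact ((hS.isCell hA').subset_of_cellInt_subset (hS.isCell hB.1) hAB).trans
      (subset_sUnion_of_mem hB)

lemma isOpen_cellNbhd (hS : IsChartSystem Kα) (A : Set (Vn n)) :
    IsOpen (cellNbhd (systemLimit Kα) A) := by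
  refine Metric.isOpen_iff.2 fun x hx => ?_
  obtain ⟨B, ⟨hB, hAB⟩, hxB⟩ := mem_iUnion₂.1 hx
  obtain ⟨e, s, α, hs, hd, rfl, hK⟩ := hS.exists_chart hB.1
  rw [cellInt_image_refCell hs hd] at hxB
  obtain ⟨p, hp, rfl⟩ := hxB
  obtain ⟨r, hr, hpr⟩ :=
    Metric.isOpen_iff.1 (isOpen_refStar α) p (refOpenCell_subset_refStar α hp)
  refine ⟨s * r, mul_pos hs hr, ?_⟩
  rw [← image_ball_of_dist_eq hs hd]
  exact ((image_mono hpr).trans (hS.image_refStar_subset_cellNbhd hs hd hK α)).trans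
    (cellNbhd_anti hAB)

lemma ball_infDist_cellBry_subset_cellNbhd (hS : IsChartSystem Kα) {A : Set (Vn n)}
    (hA : A ∈ ⋃ a, Kα a) (hdim : 1 ≤ cellDim A) {p : Vn n} (hp : p ∈ cellInt A) :
    ball p (infDist p (cellBry A)) ⊆ cellNbhd (systemLimit Kα) A := by
  obtain ⟨e, s, α, hs, hd, rfl, hK⟩ := hS.exists_chart hA
  obtain ⟨j, hj⟩ := exists_ne_one_of_one_le_cellDim hdim
  rw [cellInt_image_refCell hs hd] at hp
  obtain ⟨q, hq, rfl⟩ := hp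
  calc ball (e q) (infDist (e q) (cellBry (e '' refCell n α)))
      ⊆ ball (e q) (s * infDist q (cellBry (refCell n α))) := by
        rw [cellBry_image_of_dist_eq hs hd]
        exact ball_subset_ball (infDist_image_le_of_dist_eq hs hd q _)
    _ = e '' ball q (infDist q (cellBry (refCell n α))) := (image_ball_of_dist_eq hs hd q _).symm
    _ ⊆ e '' refStar n α := image_mono (ball_infDist_cellBry_subset_refStar hj hq)
    _ ⊆ cellNbhd (systemLimit Kα) (e '' refCell n α) :=
        hS.image_refStar_subset_cellNbhd hs hd hK α

lemma setOf_infDist_lt_subset_cellNbhd (hS : IsChartSystem Kα) {A : Set (Vn n)}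
    (hA : A ∈ ⋃ a, Kα a) (hdim : 1 ≤ cellDim A) :
    {x : Vn n | infDist x A < 2⁻¹ * infDist x (cellBry A)} ⊆ cellNbhd (systemLimit Kα) A := by
  intro x hx
  have hcell := hS.isCell hA
  obtain ⟨p, hpA, hxp⟩ := exists_dist_lt_infDist_of_infDist_lt_half hcell.isCompact
    (hcell.cellInt_nonempty.mono fun _ h => h.1) hx
  have hp : p ∈ cellInt A := by
    by_contra hp
    have := infDist_zero_of_mem (x := p) (show p ∈ cellBry A from ⟨hpA, hp⟩)
    linarith [dist_nonneg (x := x) (y := p)]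
  exact hS.ball_infDist_cellBry_subset_cellNbhd hA hdim hp (mem_ball.2 hxp)

lemma exists_supersets_subset_range (hS : IsChartSystem Kα) {A : Set (Vn n)} (hA : A ∈ ⋃ a, Kα a) :
    ∃ D : (Fin n → Fin 3) → Set (Vn n), {B ∈ systemLimit Kα | A ⊆ B} ⊆ range D := by
  obtain ⟨e, s, α, hs, hd, rfl, hK⟩ := hS.exists_chart hA
  choose D hD hβD using fun β => hS.exists_mem_systemLimit_cellInt_subset (hK β)
  refine ⟨D, fun B ⟨hB, hAB⟩ => ?_⟩
  obtain ⟨p, hp⟩ := refOpenCell_nonempty α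
  obtain ⟨r, hr, hpr⟩ :=
    Metric.isOpen_iff.1 (isOpen_refStar α) p (refOpenCell_subset_refStar α hp)
  have hepB : e p ∈ closure (cellInt B) := by
    rw [(hS.isCell hB.1).closure_cellInt]
    exact hAB (mem_image_of_mem e (refOpenCell_subset_refCell α hp))
  obtain ⟨z, hzB, hzp⟩ := Metric.mem_closure_iff.1 hepB (s * r) (mul_pos hs hr)
  rw [← mem_ball', ← image_ball_of_dist_eq hs hd] at hzp
  obtain ⟨w, hw, rfl⟩ := hzp
  obtain ⟨β, -, hwβ⟩ := exists_refCell_subset_of_mem_refStar (hpr hw)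
  have hew : e w ∈ cellInt (e '' refCell n β) := by
    rw [cellInt_image_refCell hs hd]
    exact mem_image_of_mem e hwβ
  exact ⟨β, hS.eq_of_mem_systemLimit (hD β) hB ⟨e w, hβD β hew, hzB⟩⟩

lemma finite_and_ncard_supersets_le (hS : IsChartSystem Kα) {A : Set (Vn n)} (hA : A ∈ ⋃ a, Kα a) :
    {B ∈ systemLimit Kα | A ⊆ B}.Finite ∧ {B ∈ systemLimit Kα | A ⊆ B}.ncard ≤ 3 ^ n := by
  obtain ⟨D, hD⟩ := hS.exists_supersets_subset_range hA
  refine ⟨(finite_range D).subset hD, ?_⟩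
  calc {B ∈ systemLimit Kα | A ⊆ B}.ncard ≤ (range D).ncard :=
        ncard_le_ncard hD (finite_range D)
    _ ≤ (univ : Set (Fin n → Fin 3)).ncard := by rw [← image_univ]; exact ncard_image_le
    _ = 3 ^ n := by simp [ncard_univ]

lemma isComplex_systemLimit (hS : IsChartSystem Kα) : IsComplex (systemLimit Kα) := by
  refine ⟨fun A hA => hS.isCell hA.1, fun A hA B hB hAB => ?_, fun x hx => ?_, fun A hA => ?_⟩
  · exact not_nonempty_iff_eq_empty.1 fun h => hAB (hS.eq_of_mem_systemLimit hA hB h)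
  · rw [hS.sUnion_systemLimit] at hx
    obtain ⟨U, hU, hxU, S, hSfin, hSK, hcover⟩ := hS.2.2 x hx
    refine ⟨U, hU, hxU, (hSfin.image fun B => closure (cellInt B)).subset ?_⟩
    rintro A ⟨hA, y, hyA, hyU⟩
    have hyK : y ∈ ⋃ a, ⋃₀ Kα a := hS.sUnion_systemLimit ▸ mem_sUnion_of_mem hyA hA
    obtain ⟨B, hBS, hAB⟩ := hcover A hA.1 ⟨y, hyA, hyU, hyK⟩
    have hBA := hA.2 B (hSK hBS) <| by
      rw [inter_eq_left.2 hAB]; exact (hS.isCell hA.1).cellInt_nonempty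
    refine ⟨B, hBS, ?_⟩
    show closure (cellInt B) = A
    rw [← hAB.antisymm hBA, (hS.isCell hA.1).closure_cellInt]
  · exact ⟨_, hS.isOpen_cellNbhd A, subset_biUnion_of_mem (u := cellInt) ⟨hA, subset_rfl⟩,
      inter_subset_left⟩

end IsChartSystem

end ChartSystems

/-- **Properties of the limit of a system of `n`-charts.** -/
theorem system_limit_properties (n : ℕ) :
    ∃ κ : ℝ, 1 ≤ κ ∧
    ∀ (ι : Type) (Kα : ι → Set (Set (Vn n))), IsChartSystem Kα →
      IsComplex (systemLimit Kα) ∧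
      ⋃₀ systemLimit Kα = ⋃ a, ⋃₀ (Kα a) ∧
      (∀ A ∈ ⋃ a, Kα a, ∃ B ∈ systemLimit Kα, cellInt A ⊆ cellInt B) ∧
      (∀ A ∈ systemLimit Kα, IsOpen (cellNbhd (systemLimit Kα) A)) ∧
      (∀ A ∈ systemLimit Kα, 1 ≤ cellDim A →
        {x : Vn n | Metric.infDist x A < κ⁻¹ * Metric.infDist x (cellBry A)} ⊆
          cellNbhd (systemLimit Kα) A) ∧
      (∀ A ∈ systemLimit Kα, {B ∈ systemLimit Kα | A ⊆ B}.Finite ∧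
        {B ∈ systemLimit Kα | A ⊆ B}.ncard ≤ 3 ^ n) := by
  refine ⟨2, one_le_two, fun ι Kα hS => ⟨hS.isComplex_systemLimit, hS.sUnion_systemLimit,
    fun A hA => hS.exists_mem_systemLimit_cellInt_subset hA, fun A _ => hS.isOpen_cellNbhd A,
    fun A hA hdim => hS.setOf_infDist_lt_subset_cellNbhd hA.1 hdim,
    fun A hA => hS.finite_and_ncard_supersets_le hA.1⟩⟩

end Paper
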